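/- arXiv:2207.13660 — 2 statements merged into one kernel-verified Lean document; each statement's English description precedes it below -/
import Mathlib

section
/- Let S be a finite nonempty set and let l, u : S → ℝ satisfy 0 ≤ l(s) ≤ u(s) ≤ 1 for all s ∈ S, and let D(l,u) = {p : S → ℝ | ∑_{s∈S} p(s) = 1 and l(s) ≤ p(s) ≤ u(s) for all s ∈ S}. A point p ∈ D(l,u) is an extreme point of D(l,u) if and only if there is at most one s ∈ S with l(s) < p(s) < u(s), i.e., p(s) ∈ {l(s), u(s)} for all but at most one coordinate. -/
/-!
A coordinate of `p` sitting at one of its bounds is an extreme point of the interval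
`[l s, u s]`, so it cannot move inside any open segment through `p`. If at most one coordinate
is strictly inside its interval, every other coordinate is thus frozen and the constraint
`∑ s, p s = 1` freezes the last one. Conversely, if two coordinates `i ≠ j` are strictly inside,
moving mass `±t` between them stays feasible for small `t`, and `p` is the midpoint of the two
perturbed distributions.
-/

open Filter Topology

/-- The set `D(l, u)` of the paper. -/
def boundedDistributions {S : Type*} [Fintype S] (l u : S → ℝ) : Set (S → ℝ) :=
  {p | ∑ s, p s = 1 ∧ ∀ s, l s ≤ p s ∧ p s ≤ u s}

theorem Fintype.eq_of_sum_eq_of_subsingleton_ne {ι M : Type*} [Fintype ι]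
    [AddCancelCommMonoid M] {f g : ι → M} (hsum : ∑ i, f i = ∑ i, g i)
    (hne : {i | f i ≠ g i}.Subsingleton) : f = g := by
  classical
  funext i₀
  by_contra h₀
  have hcompl : ∑ i ∈ {i₀}ᶜ, f i = ∑ i ∈ {i₀}ᶜ, g i :=
    Finset.sum_congr rfl fun i hi ↦ by
      by_contra hi'
      exact Finset.mem_compl.1 hi (Finset.mem_singleton.2 (hne hi' h₀))
  rw [Fintype.sum_eq_add_sum_compl i₀, Fintype.sum_eq_add_sum_compl i₀ g, hcompl] at hsum
  exact h₀ (add_right_cancel hsum)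

theorem eq_zero_of_mem_extremePoints_of_eventually_add_smul_mem {E : Type*} [AddCommGroup E]
    [Module ℝ E] {A : Set E} {x v : E} (hx : x ∈ A.extremePoints ℝ)
    (h : ∀ᶠ t in 𝓝 (0 : ℝ), x + t • v ∈ A) : v = 0 := by
  have hneg : ∀ᶠ t in 𝓝 (0 : ℝ), x - t • v ∈ A := by
    have := (continuous_neg.tendsto' (0 : ℝ) 0 neg_zero).eventually h
    simpa [sub_eq_add_neg] using this
  obtain ⟨t, ⟨hadd, hsub⟩, ht⟩ :=
    (((h.and hneg).filter_mono nhdsWithin_le_nhds).and self_mem_nhdsWithin :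
      ∀ᶠ t in 𝓝[≠] (0 : ℝ), _).exists
  have : x + t • v = x := hx.2 hadd hsub (mem_openSegment_add_sub x (t • v))
  simpa [show t ≠ 0 from ht] using this

section BoundedDistributions

variable {S : Type*} [Fintype S] {l u p : S → ℝ}

theorem eventually_add_smul_mem_boundedDistributions (hp : p ∈ boundedDistributions l u)
    {v : S → ℝ} (hv_sum : ∑ s, v s = 0) (hv : ∀ s, v s ≠ 0 → l s < p s ∧ p s < u s) :
    ∀ᶠ t in 𝓝 (0 : ℝ), p + t • v ∈ boundedDistributions l u := by
  have hbounds : ∀ s, ∀ᶠ t in 𝓝 (0 : ℝ), l s ≤ p s + t * v s ∧ p s + t * v s ≤ u s := by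
    intro s
    by_cases hvs : v s = 0
    · simpa [hvs] using Eventually.of_forall (f := 𝓝 (0 : ℝ)) fun _ ↦ hp.2 s
    obtain ⟨hl, hu⟩ := hv s hvs
    have hlim : Tendsto (fun t : ℝ ↦ p s + t * v s) (𝓝 0) (𝓝 (p s)) := by
      have hcont : Continuous fun t : ℝ ↦ p s + t * v s := by fun_prop
      simpa using hcont.tendsto 0
    exact ((hlim.eventually (lt_mem_nhds hl)).and (hlim.eventually (gt_mem_nhds hu))).mono
      fun _ h ↦ ⟨h.1.le, h.2.le⟩
  filter_upwards [eventually_all.2 hbounds] with t ht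
  refine ⟨?_, ht⟩
  simp [Finset.sum_add_distrib, ← Finset.mul_sum, hv_sum, hp.1]

theorem apply_eq_of_mem_openSegment_of_not_strict {x y : S → ℝ}
    (hx : x ∈ boundedDistributions l u) (hy : y ∈ boundedDistributions l u)
    (hp : p ∈ boundedDistributions l u) (hxy : p ∈ openSegment ℝ x y) {s : S}
    (hs : ¬(l s < p s ∧ p s < u s)) : x s = p s := by
  have hext : p s ∈ (Set.Icc (l s) (u s)).extremePoints ℝ := by
    rw [Set.extremePoints_Icc ((hp.2 s).1.trans (hp.2 s).2)]
    grind [hp.2 s]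
  obtain ⟨a, b, ha, hb, hab, hcomb⟩ := hxy
  exact hext.2 (hx.2 s) (hy.2 s) ⟨a, b, ha, hb, hab, by simp [← hcomb]⟩

theorem subsingleton_strict_of_mem_extremePoints
    (hp : p ∈ (boundedDistributions l u).extremePoints ℝ) :
    {s | l s < p s ∧ p s < u s}.Subsingleton := by
  classical
  intro i hi j hj
  by_contra hij
  set v : S → ℝ := Pi.single i 1 - Pi.single j 1
  have hv_sum : ∑ s, v s = 0 := by simp [v, Finset.sum_sub_distrib]
  have hv_supp : ∀ s, v s ≠ 0 → l s < p s ∧ p s < u s := by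
    intro s hs
    obtain rfl | rfl : s = i ∨ s = j := by
      by_contra! h
      simp [v, h.1, h.2] at hs
    exacts [hi, hj]
  have hv : v = 0 := eq_zero_of_mem_extremePoints_of_eventually_add_smul_mem hp
    (eventually_add_smul_mem_boundedDistributions hp.1 hv_sum hv_supp)
  simpa [v, hij] using congrFun hv i

theorem mem_extremePoints_of_subsingleton_strict (hp : p ∈ boundedDistributions l u)
    (hstrict : {s | l s < p s ∧ p s < u s}.Subsingleton) :
    p ∈ (boundedDistributions l u).extremePoints ℝ := by
  refine ⟨hp, fun x hx y hy hxy ↦ ?_⟩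
  refine Fintype.eq_of_sum_eq_of_subsingleton_ne (hx.1.trans hp.1.symm) (hstrict.anti ?_)
  intro s hs
  by_contra hs'
  exact hs (apply_eq_of_mem_openSegment_of_not_strict hx hy hp hxy hs')

end BoundedDistributions

theorem extremePoint_iff_at_most_one_strict_general
    (S : Type*) [Fintype S]
    (l u : S → ℝ)
    (p : S → ℝ)
    (hp : p ∈ ({p : S → ℝ | (∑ s, p s) = 1 ∧ ∀ s, l s ≤ p s ∧ p s ≤ u s} : Set (S → ℝ))) :
    p ∈ ({p : S → ℝ | (∑ s, p s) = 1 ∧ ∀ s, l s ≤ p s ∧ p s ≤ u s} :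
          Set (S → ℝ)).extremePoints ℝ ↔
      ({s : S | l s < p s ∧ p s < u s} : Set S).Subsingleton :=
  ⟨subsingleton_strict_of_mem_extremePoints, mem_extremePoints_of_subsingleton_strict hp⟩

theorem extremePoint_iff_at_most_one_strict
    (S : Type*) [Fintype S] [Nonempty S]
    (l u : S → ℝ)
    (hbounds : ∀ s, 0 ≤ l s ∧ l s ≤ u s ∧ u s ≤ 1)
    (p : S → ℝ)
    (hp : p ∈ ({p : S → ℝ | (∑ s, p s) = 1 ∧ ∀ s, l s ≤ p s ∧ p s ≤ u s} : Set (S → ℝ))) :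
    p ∈ ({p : S → ℝ | (∑ s, p s) = 1 ∧ ∀ s, l s ≤ p s ∧ p s ≤ u s} :
          Set (S → ℝ)).extremePoints ℝ ↔
      ({s : S | l s < p s ∧ p s < u s} : Set S).Subsingleton :=
  extremePoint_iff_at_most_one_strict_general S l u p hp
end

section
/- Let S be a finite nonempty set and let l, u : S → ℝ satisfy 0 ≤ l(s) ≤ u(s) ≤ 1 for all s ∈ S, and let D(l,u) = {p : S → ℝ | ∑_{s∈S} p(s) = 1 and l(s) ≤ p(s) ≤ u(s) for all s ∈ S}. Then D(l,u) equals the convex hull of the set B = {p ∈ D(l,u) | at most one s ∈ S satisfies l(s) < p(s) < u(s)}; i.e., randomizing over the basic feasible solutions yields exactly the set of consistent distributions. -/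
open Finset in
private lemma bfs_step {S : Type*} [Fintype S] [DecidableEq S] (l u p : S → ℝ)
    (hsum : (∑ s, p s) = 1) (hb : ∀ s, l s ≤ p s ∧ p s ≤ u s)
    {s t : S} (hst : s ≠ t) (hs : l s < p s ∧ p s < u s) (ht : l t < p t ∧ p t < u t) :
    ∃ ε : ℝ, ∃ q : S → ℝ, 0 < ε ∧
       ((∑ r, q r) = 1 ∧ ∀ r, l r ≤ q r ∧ q r ≤ u r) ∧
       (univ.filter (fun r => l r < q r ∧ q r < u r)) ⊂
         (univ.filter (fun r => l r < p r ∧ p r < u r)) ∧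
       q = fun r => if r = s then p s + ε else if r = t then p t - ε else p r := by
  classical
  set ε : ℝ := min (u s - p s) (p t - l t) with hε
  have hε0 : 0 < ε := lt_min (by linarith [hs.2]) (by linarith [ht.1])
  set q : S → ℝ := fun r => if r = s then p s + ε else if r = t then p t - ε else p r with hq
  have hqs : q s = p s + ε := by simp [hq]
  have hqt : q t = p t - ε := by
    simp only [hq]
    rw [if_neg (Ne.symm hst)]
    simp
  have hqo : ∀ r, r ≠ s → r ≠ t → q r = p r := by
    intro r h1 h2
    simp only [hq]
    rw [if_neg h1, if_neg h2]
  have hεle1 : ε ≤ u s - p s := min_le_left _ _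
  have hεle2 : ε ≤ p t - l t := min_le_right _ _
  refine ⟨ε, q, hε0, ⟨?_, ?_⟩, ?_, rfl⟩
  · have hsplit : ∀ r, q r = p r + ((if r = s then ε else 0) + (if r = t then -ε else 0)) := by
      intro r
      by_cases h1 : r = s
      · subst h1
        rw [hqs, if_pos rfl, if_neg hst]
        ring
      · by_cases h2 : r = t
        · subst h2
          rw [hqt, if_neg h1, if_pos rfl]
          ring
        · rw [hqo r h1 h2, if_neg h1, if_neg h2]
          ring
    rw [Finset.sum_congr rfl (fun r _ => hsplit r), Finset.sum_add_distrib, hsum,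
      Finset.sum_add_distrib, Finset.sum_ite_eq' univ s (fun _ => ε),
      Finset.sum_ite_eq' univ t (fun _ => -ε)]
    simp
  · intro r
    by_cases h1 : r = s
    · subst h1
      rw [hqs]
      exact ⟨by linarith [(hb r).1], by linarith⟩
    · by_cases h2 : r = t
      · subst h2
        rw [hqt]
        exact ⟨by linarith, by linarith [(hb r).2]⟩
      · rw [hqo r h1 h2]; exact hb r
  · rw [Finset.ssubset_iff_of_subset]
    · rcases min_cases (u s - p s) (p t - l t) with ⟨hmin, _⟩ | ⟨hmin, _⟩
      · refine ⟨s, by simp [hs.1, hs.2], ?_⟩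
        have hqsu : q s = u s := by rw [hqs, hε, hmin]; ring
        simp only [Finset.mem_filter, Finset.mem_univ, true_and, hqsu]
        intro h
        exact lt_irrefl _ h.2
      · refine ⟨t, by simp [ht.1, ht.2], ?_⟩
        have hqtl : q t = l t := by rw [hqt, hε, hmin]; ring
        simp only [Finset.mem_filter, Finset.mem_univ, true_and, hqtl]
        intro h
        exact lt_irrefl _ h.1
    · intro r hr
      simp only [Finset.mem_filter, Finset.mem_univ, true_and] at hr ⊢
      by_cases h1 : r = s
      · subst h1
        rw [hqs] at hr
        exact ⟨by linarith [hr.1], by linarith [hr.2]⟩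
      · by_cases h2 : r = t
        · subst h2
          rw [hqt] at hr
          exact ⟨by linarith [hr.1], by linarith [hr.2]⟩
        · rw [hqo r h1 h2] at hr
          exact hr

theorem feasible_set_eq_convexHull_bfs
    (S : Type*) [Fintype S] [Nonempty S]
    (l u : S → ℝ)
    (hbounds : ∀ s, 0 ≤ l s ∧ l s ≤ u s ∧ u s ≤ 1) :
    ({p : S → ℝ | (∑ s, p s) = 1 ∧ ∀ s, l s ≤ p s ∧ p s ≤ u s} : Set (S → ℝ)) =
      convexHull ℝ
        {p : S → ℝ | ((∑ s, p s) = 1 ∧ ∀ s, l s ≤ p s ∧ p s ≤ u s) ∧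
          ({s : S | l s < p s ∧ p s < u s} : Set S).Subsingleton} := by
  classical
  set B : Set (S → ℝ) := {p : S → ℝ | ((∑ s, p s) = 1 ∧ ∀ s, l s ≤ p s ∧ p s ≤ u s) ∧
          ({s : S | l s < p s ∧ p s < u s} : Set S).Subsingleton} with hB
  apply Set.Subset.antisymm
  · intro p hp
    have key : ∀ n : ℕ, ∀ p : S → ℝ,
        ((∑ s, p s) = 1 ∧ ∀ s, l s ≤ p s ∧ p s ≤ u s) →
        (Finset.univ.filter (fun r => l r < p r ∧ p r < u r)).card ≤ n →
        p ∈ convexHull ℝ B := by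
      intro n
      induction n with
      | zero =>
        intro p hp hcard
        apply subset_convexHull
        refine ⟨hp, ?_⟩
        intro a ha b hb
        have h1 : (Finset.univ.filter (fun r => l r < p r ∧ p r < u r)).card ≤ 1 := by omega
        exact Finset.card_le_one.mp h1 a (by simpa using ha) b (by simpa using hb)
      | succ n ih =>
        intro p hp hcard
        by_cases hone : (Finset.univ.filter (fun r => l r < p r ∧ p r < u r)).card ≤ 1
        · apply subset_convexHull
          refine ⟨hp, ?_⟩
          intro a ha b hb
          exact Finset.card_le_one.mp hone a (by simpa using ha) b (by simpa using hb)
        · push_neg at hone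
          obtain ⟨s, hsf, t, htf, hst⟩ := Finset.one_lt_card.mp hone
          simp only [Finset.mem_filter, Finset.mem_univ, true_and] at hsf htf
          obtain ⟨ε₁, q₁, hε₁, hq₁mem, hq₁ss, hq₁def⟩ :=
            bfs_step l u p hp.1 hp.2 hst hsf htf
          obtain ⟨ε₂, q₂, hε₂, hq₂mem, hq₂ss, hq₂def⟩ :=
            bfs_step l u p hp.1 hp.2 hst.symm htf hsf
          have hc1 : q₁ ∈ convexHull ℝ B := by
            apply ih q₁ hq₁mem
            have := Finset.card_lt_card hq₁ss
            omega
          have hc2 : q₂ ∈ convexHull ℝ B := by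
            apply ih q₂ hq₂mem
            have := Finset.card_lt_card hq₂ss
            omega
          have hne : ε₁ + ε₂ ≠ 0 := by positivity
          have hab : (ε₂ / (ε₁ + ε₂)) + (ε₁ / (ε₁ + ε₂)) = 1 := by
            field_simp
            ring
          have hpeq : p = (ε₂ / (ε₁ + ε₂)) • q₁ + (ε₁ / (ε₁ + ε₂)) • q₂ := by
            funext r
            simp only [Pi.add_apply, Pi.smul_apply, smul_eq_mul, hq₁def, hq₂def]
            by_cases h1 : r = s
            · subst h1
              rw [if_pos rfl, if_neg hst, if_pos rfl]
              field_simp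
              ring
            · by_cases h2 : r = t
              · subst h2
                rw [if_neg h1, if_pos rfl, if_pos rfl]
                field_simp
                ring
              · rw [if_neg h1, if_neg h2, if_neg h2, if_neg h1]
                field_simp
                ring
          rw [hpeq]
          exact (convex_convexHull ℝ B) hc1 hc2 (by positivity) (by positivity) hab
    exact key (Fintype.card S) p hp (le_trans (Finset.card_le_univ _) (by simp))
  · apply convexHull_min
    · intro p hp; exact hp.1
    · intro x hx y hy a b ha hb hab
      constructor
      · simp only [Pi.add_apply, Pi.smul_apply, smul_eq_mul]
        rw [Finset.sum_add_distrib, ← Finset.mul_sum, ← Finset.mul_sum, hx.1, hy.1]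
        linarith
      · intro r
        have hxr := hx.2 r
        have hyr := hy.2 r
        simp only [Pi.add_apply, Pi.smul_apply, smul_eq_mul]
        constructor
        · have h1 : a * l r ≤ a * x r := mul_le_mul_of_nonneg_left hxr.1 ha
          have h2 : b * l r ≤ b * y r := mul_le_mul_of_nonneg_left hyr.1 hb
          have h3 : a * l r + b * l r = l r := by rw [← add_mul, hab, one_mul]
          linarith
        · have h1 : a * x r ≤ a * u r := mul_le_mul_of_nonneg_left hxr.2 ha
          have h2 : b * y r ≤ b * u r := mul_le_mul_of_nonneg_left hyr.2 hb
          have h3 : a * u r + b * u r = u r := by rw [← add_mul, hab, one_mul]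
          linarith
end
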